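/- The six elements â0, â2, b̂0, b̂1, b̂2, b̂3 of the ring R are algebraically independent over ℂ (note that â1 = 0 by construction). -/
import Mathlib

set_option maxHeartbeats 1000000
set_option synthInstance.maxHeartbeats 400000

open MvPolynomial Complex

/-- The ring `R`: we realize the localization of `ℂ[α0,α1,α2,β0,β1,β2,β3]` at `α0, β0`
inside the fraction field, where `α0` and `β0` are invertible. -/
noncomputable abbrev Frac : Type := FractionRing (MvPolynomial (Fin 7) ℂ)

/-- `α0, α1, α2` (coefficients of the binary quadratic) -/
noncomputable def alph : ℕ → Frac
  | 0 => algebraMap (MvPolynomial (Fin 7) ℂ) Frac (X 0)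
  | 1 => algebraMap (MvPolynomial (Fin 7) ℂ) Frac (X 1)
  | 2 => algebraMap (MvPolynomial (Fin 7) ℂ) Frac (X 2)
  | _ => 0

/-- `β0, β1, β2, β3` (coefficients of the binary cubic) -/
noncomputable def bet : ℕ → Frac
  | 0 => algebraMap (MvPolynomial (Fin 7) ℂ) Frac (X 3)
  | 1 => algebraMap (MvPolynomial (Fin 7) ℂ) Frac (X 4)
  | 2 => algebraMap (MvPolynomial (Fin 7) ℂ) Frac (X 5)
  | 3 => algebraMap (MvPolynomial (Fin 7) ℂ) Frac (X 6)
  | _ => 0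

/-- `â_i = Σ_{j=0}^{i} α_j · C(2−j, 2−i) · (−α1/(2α0))^{i−j}` -/
noncomputable def ahat (i : ℕ) : Frac :=
  ∑ j ∈ Finset.range (i + 1),
    alph j * (Nat.choose (2 - j) (2 - i) : Frac) * (-alph 1 / (2 * alph 0)) ^ (i - j)

/-- `b̂_i = Σ_{j=0}^{i} β_j · C(3−j, 3−i) · (−α1/(2α0))^{i−j}` -/
noncomputable def bhat (i : ℕ) : Frac :=
  ∑ j ∈ Finset.range (i + 1),
    bet j * (Nat.choose (3 - j) (3 - i) : Frac) * (-alph 1 / (2 * alph 0)) ^ (i - j)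

/-- `ĉ_i = Σ_{j=0}^{i} α_j · C(2−j, 2−i) · (−β1/(3β0))^{i−j}` -/
noncomputable def chat (i : ℕ) : Frac :=
  ∑ j ∈ Finset.range (i + 1),
    alph j * (Nat.choose (2 - j) (2 - i) : Frac) * (-bet 1 / (3 * bet 0)) ^ (i - j)

/-- `d̂_i = Σ_{j=0}^{i} β_j · C(3−j, 3−i) · (−β1/(3β0))^{i−j}` -/
noncomputable def dhat (i : ℕ) : Frac :=
  ∑ j ∈ Finset.range (i + 1),
    bet j * (Nat.choose (3 - j) (3 - i) : Frac) * (-bet 1 / (3 * bet 0)) ^ (i - j)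

namespace Stmt11aux

noncomputable abbrev P := MvPolynomial (Fin 7) ℂ
noncomputable abbrev A := Localization.Away (X 0 : P)

/-- The algebra map `P → Frac` as an `AlgHom`. -/
noncomputable def gF : P →ₐ[ℂ] Frac := IsScalarTower.toAlgHom ℂ P Frac

lemma gF_inj : Function.Injective gF := IsFractionRing.injective P Frac

lemma hx0 : gF (X 0) ≠ 0 :=
  fun h => X_ne_zero (R := ℂ) (σ := Fin 7) 0 (gF_inj (by simpa using h))

lemma hunit : ∀ y : Submonoid.powers (X 0 : P), IsUnit (gF y) := by
  rintro ⟨y, n, rfl⟩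
  refine IsUnit.mk0 _ ?_
  simp only [map_pow]
  exact pow_ne_zero _ hx0

/-- The inclusion `A → Frac`. -/
noncomputable def j : A →ₐ[ℂ] Frac :=
  IsLocalization.liftAlgHom (M := Submonoid.powers (X 0 : P)) hunit

lemma j_inj : Function.Injective j := by
  rw [show ⇑j = ⇑(IsLocalization.lift (M := Submonoid.powers (X 0 : P)) hunit) from rfl]
  rw [IsLocalization.lift_injective_iff]
  intro x y
  constructor
  · intro h
    have := (IsLocalization.injective A (powers_le_nonZeroDivisors_of_noZeroDivisors
      (X_ne_zero (R := ℂ) (σ := Fin 7) 0))) h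
    rw [this]
  · intro h; rw [gF_inj h]

/-- The specialization sending `X 1` to `0`. -/
noncomputable def z : Fin 7 → Frac := fun k => if k = 1 then 0 else gF (X k)

lemma z0 : z 0 = gF (X 0) := rfl
lemma z1 : z 1 = 0 := rfl
lemma z2 : z 2 = gF (X 2) := rfl
lemma z3 : z 3 = gF (X 3) := rfl
lemma z4 : z 4 = gF (X 4) := rfl
lemma z5 : z 5 = gF (X 5) := rfl
lemma z6 : z 6 = gF (X 6) := rfl

lemma hunit' : ∀ y : Submonoid.powers (X 0 : P), IsUnit ((aeval z : P →ₐ[ℂ] Frac) y) := by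
  rintro ⟨y, n, rfl⟩
  refine IsUnit.mk0 _ ?_
  simp only [map_pow, aeval_X, z0]
  exact pow_ne_zero _ hx0

noncomputable def φ : A →ₐ[ℂ] Frac :=
  IsLocalization.liftAlgHom (M := Submonoid.powers (X 0 : P)) (f := aeval z) hunit'

lemma j_algebraMap (p : P) : j (algebraMap P A p) = gF p :=
  IsLocalization.lift_eq _ _

lemma φ_algebraMap (p : P) : φ (algebraMap P A p) = aeval z p :=
  IsLocalization.lift_eq _ _

noncomputable def inv0 : A := IsLocalization.Away.invSelf (X 0 : P)

lemma j_inv0 : j inv0 = (gF (X 0))⁻¹ := by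
  have h : algebraMap P A (X 0) * inv0 = 1 := IsLocalization.Away.mul_invSelf _
  have := congrArg j h
  rw [map_mul, map_one, j_algebraMap] at this
  exact eq_inv_of_mul_eq_one_left (by linear_combination this)

lemma φ_inv0 : φ inv0 = (gF (X 0))⁻¹ := by
  have h : algebraMap P A (X 0) * inv0 = 1 := IsLocalization.Away.mul_invSelf _
  have := congrArg φ h
  rw [map_mul, map_one, φ_algebraMap, aeval_X, z0] at this
  exact eq_inv_of_mul_eq_one_left (by linear_combination this)

noncomputable def tA : A := -(algebraMap ℂ A 2⁻¹ * algebraMap P A (X 1) * inv0)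

noncomputable def vA : Fin 6 → A :=
  ![algebraMap P A (X 0),
    algebraMap P A (X 2) + algebraMap P A (X 1) * tA + algebraMap P A (X 0) * tA ^ 2,
    algebraMap P A (X 3),
    algebraMap P A (X 4) + algebraMap P A (X 3) * (3 : A) * tA,
    algebraMap P A (X 5) + algebraMap P A (X 4) * (2 : A) * tA
      + algebraMap P A (X 3) * (3 : A) * tA ^ 2,
    algebraMap P A (X 6) + algebraMap P A (X 5) * tA + algebraMap P A (X 4) * tA ^ 2
      + algebraMap P A (X 3) * tA ^ 3]

lemma φ_tA : φ tA = 0 := by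
  simp [tA, φ_algebraMap, z1]

lemma j_tA : j tA = -gF (X 1) / (2 * gF (X 0)) := by
  have h2 : (algebraMap ℂ Frac) 2⁻¹ = 2⁻¹ := by
    rw [map_inv₀, map_ofNat]
  simp only [tA, map_neg, map_mul, j_algebraMap, j_inv0, AlgHom.commutes, h2]
  rw [div_eq_mul_inv, mul_inv]
  ring

noncomputable def w : Fin 6 → Frac :=
  ![gF (X 0), gF (X 2), gF (X 3), gF (X 4), gF (X 5), gF (X 6)]

lemma φ_vA : (⇑φ ∘ vA) = w := by
  funext i
  fin_cases i
  · show φ (algebraMap P A (X 0)) = gF (X 0)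
    simp [φ_algebraMap, z0]
  · show φ (algebraMap P A (X 2) + algebraMap P A (X 1) * tA
        + algebraMap P A (X 0) * tA ^ 2) = gF (X 2)
    simp [φ_algebraMap, φ_tA, z2]
  · show φ (algebraMap P A (X 3)) = gF (X 3)
    simp [φ_algebraMap, z3]
  · show φ (algebraMap P A (X 4) + algebraMap P A (X 3) * (3 : A) * tA) = gF (X 4)
    simp [φ_algebraMap, φ_tA, z4]
  · show φ (algebraMap P A (X 5) + algebraMap P A (X 4) * (2 : A) * tA
        + algebraMap P A (X 3) * (3 : A) * tA ^ 2) = gF (X 5)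
    simp [φ_algebraMap, φ_tA, z5]
  · show φ (algebraMap P A (X 6) + algebraMap P A (X 5) * tA + algebraMap P A (X 4) * tA ^ 2
        + algebraMap P A (X 3) * tA ^ 3) = gF (X 6)
    simp [φ_algebraMap, φ_tA, z6]

lemma w_ind : AlgebraicIndependent ℂ w := by
  have h1 : AlgebraicIndependent ℂ (X : Fin 7 → P) :=
    MvPolynomial.algebraicIndependent_X (Fin 7) ℂ
  have h2 := h1.map' (f := gF) gF_inj
  have h3 := h2.comp (![0, 2, 3, 4, 5, 6] : Fin 6 → Fin 7) (by decide)
  convert h3 using 1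
  funext i
  fin_cases i <;> rfl

lemma vA_ind : AlgebraicIndependent ℂ vA :=
  AlgebraicIndependent.of_comp φ (φ_vA ▸ w_ind)

end Stmt11aux

/-- The six elements `â0, â2, b̂0, b̂1, b̂2, b̂3` of `R` are algebraically independent
over ℂ. -/
theorem stmt_11 :
    AlgebraicIndependent ℂ
      (![ahat 0, ahat 2, bhat 0, bhat 1, bhat 2, bhat 3] : Fin 6 → Frac) := by
  open Stmt11aux in
  have h := Stmt11aux.vA_ind.map' Stmt11aux.j_inj
  have he : (⇑Stmt11aux.j ∘ Stmt11aux.vA)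
      = (![ahat 0, ahat 2, bhat 0, bhat 1, bhat 2, bhat 3] : Fin 6 → Frac) := by
    have ht := Stmt11aux.j_tA
    have halph : ∀ k : Fin 7, Stmt11aux.gF (X k) = algebraMap (MvPolynomial (Fin 7) ℂ) Frac (X k) :=
      fun k => rfl
    funext i
    fin_cases i
    · show Stmt11aux.j (algebraMap Stmt11aux.P Stmt11aux.A (X 0)) = ahat 0
      simp [Stmt11aux.j_algebraMap, ahat, alph, Finset.sum_range_succ, halph]
    · show Stmt11aux.j (algebraMap Stmt11aux.P Stmt11aux.A (X 2)
          + algebraMap Stmt11aux.P Stmt11aux.A (X 1) * Stmt11aux.tA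
          + algebraMap Stmt11aux.P Stmt11aux.A (X 0) * Stmt11aux.tA ^ 2) = ahat 2
      simp [Stmt11aux.j_algebraMap, ht, ahat, alph, Finset.sum_range_succ, halph]
      ring
    · show Stmt11aux.j (algebraMap Stmt11aux.P Stmt11aux.A (X 3)) = bhat 0
      simp [Stmt11aux.j_algebraMap, bhat, bet, alph, Finset.sum_range_succ, halph, map_ofNat]
    · show Stmt11aux.j (algebraMap Stmt11aux.P Stmt11aux.A (X 4)
          + algebraMap Stmt11aux.P Stmt11aux.A (X 3) * (3 : Stmt11aux.A) * Stmt11aux.tA) = bhat 1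
      simp [Stmt11aux.j_algebraMap, ht, bhat, bet, alph, Finset.sum_range_succ, halph, map_ofNat]
      ring
    · show Stmt11aux.j (algebraMap Stmt11aux.P Stmt11aux.A (X 5)
          + algebraMap Stmt11aux.P Stmt11aux.A (X 4) * (2 : Stmt11aux.A) * Stmt11aux.tA
          + algebraMap Stmt11aux.P Stmt11aux.A (X 3) * (3 : Stmt11aux.A) * Stmt11aux.tA ^ 2)
          = bhat 2
      simp [Stmt11aux.j_algebraMap, ht, bhat, bet, alph, Finset.sum_range_succ, halph, map_ofNat]
      ring
    · show Stmt11aux.j (algebraMap Stmt11aux.P Stmt11aux.A (X 6)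
          + algebraMap Stmt11aux.P Stmt11aux.A (X 5) * Stmt11aux.tA
          + algebraMap Stmt11aux.P Stmt11aux.A (X 4) * Stmt11aux.tA ^ 2
          + algebraMap Stmt11aux.P Stmt11aux.A (X 3) * Stmt11aux.tA ^ 3) = bhat 3
      simp [Stmt11aux.j_algebraMap, ht, bhat, bet, alph, Finset.sum_range_succ, halph, map_ofNat]
      ring
  rw [← he]
  exact h
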